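/- arXiv:1801.06212 — 11 statements merged into one kernel-verified Lean document; each statement's English description precedes it below -/
import Mathlib

section
/- Let X be a product of connected topological spaces X_i indexed by I, with projection maps π_i : X → X_i. Suppose J ⊆ I has at least two elements, and for each i ∈ J a nonempty subset A_i ⊆ X_i is given. Then the set A = ⋃_{i∈J} π_i⁻¹(A_i) is a connected subset of X. -/
lemma slab_preconnected {I : Type*} (X : I → Type*)
    [∀ i, TopologicalSpace (X i)] [∀ i, ConnectedSpace (X i)]
    (i : I) (a : X i) : IsPreconnected {x : ∀ j, X j | x i = a} := by
  classical
  have h : {x : ∀ j, X j | x i = a}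
      = Set.range (fun x : ∀ j, X j => Function.update x i a) := by
    ext x
    constructor
    · intro hx
      refine ⟨x, funext fun j => ?_⟩
      by_cases hj : j = i
      · subst hj; simp [Function.update_self]; exact hx.symm
      · simp [Function.update_of_ne hj]
    · rintro ⟨y, rfl⟩
      simp [Function.update_self]
  rw [h]
  apply isPreconnected_range
  apply continuous_pi
  intro j
  by_cases hj : j = i
  · subst hj; simpa using continuous_const
  · simpa [Function.update_of_ne hj] using continuous_apply j

theorem union_preimages_connected {I : Type*} (X : I → Type*)
    [∀ i, TopologicalSpace (X i)] [∀ i, ConnectedSpace (X i)]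
    (J : Set I) (i₀ i₁ : I) (hi₀ : i₀ ∈ J) (hi₁ : i₁ ∈ J) (hne : i₀ ≠ i₁)
    (A : ∀ i, Set (X i)) (hA : ∀ i ∈ J, (A i).Nonempty) :
    IsConnected (⋃ i ∈ J, (fun x : ∀ j, X j => x i) ⁻¹' (A i)) := by
  classical
  have hnonempty : Nonempty (∀ j, X j) := by
    refine ⟨fun j => Classical.arbitrary _⟩
  set S : ∀ i : I, X i → Set (∀ j, X j) := fun i a => {x | x i = a} with hS
  have hSsub : ∀ i ∈ J, ∀ a ∈ A i,
      S i a ⊆ ⋃ i ∈ J, (fun x : ∀ j, X j => x i) ⁻¹' (A i) := by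
    intro i hi a ha z hz
    exact Set.mem_biUnion hi (by simpa [hS] using hz ▸ ha)
  have hSinter : ∀ (i k : I), i ≠ k → ∀ (a : X i) (b : X k),
      (S i a ∩ S k b).Nonempty := by
    intro i k hik a b
    refine ⟨Function.update (Function.update (Classical.arbitrary _) i a) k b, ?_, ?_⟩
    · simp [hS, Function.update_of_ne hik]
    · simp [hS]
  constructor
  · obtain ⟨a, ha⟩ := hA i₀ hi₀
    refine ⟨Function.update (Classical.arbitrary _) i₀ a, ?_⟩
    exact Set.mem_biUnion hi₀ (by simpa using ha)
  · apply isPreconnected_of_forall_pair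
    intro x hx y hy
    simp only [Set.mem_iUnion, exists_prop] at hx hy
    obtain ⟨i, hiJ, hxi⟩ := hx
    obtain ⟨j, hjJ, hyj⟩ := hy
    by_cases hij : i = j
    · subst hij
      obtain ⟨k, hkJ, hki⟩ : ∃ k ∈ J, k ≠ i := by
        by_cases h : i = i₀
        · exact ⟨i₁, hi₁, fun e => hne (h ▸ e).symm⟩
        · exact ⟨i₀, hi₀, fun e => h e.symm⟩
      obtain ⟨b, hb⟩ := hA k hkJ
      refine ⟨S i (x i) ∪ (S k b ∪ S i (y i)), ?_, ?_, ?_, ?_⟩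
      · refine Set.union_subset (hSsub i hiJ _ hxi)
          (Set.union_subset (hSsub k hkJ _ hb) (hSsub i hjJ _ hyj))
      · exact Or.inl rfl
      · exact Or.inr (Or.inr rfl)
      · obtain ⟨z₁, hz₁⟩ := hSinter i k hki.symm (x i) b
        obtain ⟨z₂, hz₂⟩ := hSinter k i hki b (y i)
        refine IsPreconnected.union z₁ hz₁.1 (Or.inl hz₁.2)
          (slab_preconnected X i (x i)) ?_
        exact IsPreconnected.union z₂ hz₂.1 hz₂.2
          (slab_preconnected X k b) (slab_preconnected X i (y i))
    · obtain ⟨z, hz⟩ := hSinter i j hij (x i) (y j)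
      refine ⟨S i (x i) ∪ S j (y j),
        Set.union_subset (hSsub i hiJ _ hxi) (hSsub j hjJ _ hyj),
        Or.inl rfl, Or.inr rfl, ?_⟩
      exact IsPreconnected.union z hz.1 hz.2
        (slab_preconnected X i (x i)) (slab_preconnected X j (y j))
end

section
/- Let X_i be connected topological spaces and Y_i be T1 topological spaces for i ∈ I, and let f_i : X_i → Y_i be functions such that f_i is non-constant for at least two distinct indices. If the product function f = ∏_{i∈I} f_i : ∏ X_i → ∏ Y_i is connectedness-preserving (i.e., maps connected subsets to connected subsets), then f is continuous. -/
open Set Function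

theorem connP_product_implies_continuous {I : Type*} (X Y : I → Type*)
    [∀ i, TopologicalSpace (X i)] [∀ i, ConnectedSpace (X i)]
    [∀ i, TopologicalSpace (Y i)] [∀ i, T1Space (Y i)]
    (f : ∀ i, X i → Y i)
    (hnc : ∃ i j : I, i ≠ j ∧ (∃ a b, f i a ≠ f i b) ∧ (∃ a b, f j a ≠ f j b))
    (hpres : ∀ A : Set (∀ i, X i), IsConnected A →
      IsConnected ((fun x i => f i (x i)) '' A)) :
    Continuous (fun (x : ∀ i, X i) i => f i (x i)) := by
  classical
  have hcont : ∀ k, Continuous (f k) := by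
    intro k
    rw [continuous_def]
    intro U hU
    rw [isOpen_iff_mem_nhds]
    intro a ha
    by_contra hna
    -- pick a nonconstant coordinate j ≠ k
    obtain ⟨j, hjk, z0, z1, hz⟩ : ∃ j, j ≠ k ∧ ∃ z0 z1, f j z0 ≠ f j z1 := by
      obtain ⟨i, j0, hij, hi, hj0⟩ := hnc
      rcases eq_or_ne i k with rfl | h
      · exact ⟨j0, hij.symm, hj0⟩
      · exact ⟨i, h, hi⟩
    set F : Set (X k) := (f k ⁻¹' U)ᶜ with hFdef
    have haF : a ∈ closure F := by
      rw [mem_closure_iff]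
      intro O hO haO
      by_contra hne
      apply hna
      refine Filter.mem_of_superset (hO.mem_nhds haO) ?_
      intro x hx
      by_contra hxU
      exact hne ⟨x, hx, hxU⟩
    obtain ⟨t0, ht0⟩ : F.Nonempty := closure_nonempty_iff.mp ⟨a, haF⟩
    have x0 : ∀ i, X i := fun i => Classical.arbitrary (X i)
    set emb : X k → X j → ∀ i, X i :=
      fun s t => Function.update (Function.update x0 k s) j t with hembdef
    have embk : ∀ s t, emb s t k = s := by
      intro s t
      simp [hembdef, Function.update_of_ne hjk.symm]
    have embj : ∀ s t, emb s t j = t := by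
      intro s t
      simp [hembdef]
    have hcont1 : ∀ t : X j, Continuous fun s => emb s t := fun t =>
      (continuous_const.update k continuous_id).update j continuous_const
    have hcont2 : ∀ s : X k, Continuous fun t => emb s t := fun s =>
      continuous_const.update j continuous_id
    set H : Set (∀ i, X i) := Set.range (fun s => emb s z1) with hHdef
    set A : Set (∀ i, X i) := ⋃ t ∈ F, (H ∪ Set.range (fun u => emb t u)) with hAdef
    have hHconn : IsConnected H := isConnected_range (hcont1 z1)
    have hmemH : ∀ s, emb s z1 ∈ H := fun s => ⟨s, rfl⟩
    have hA : IsConnected A := by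
      refine ⟨⟨emb t0 z1, mem_biUnion ht0 (Or.inl (hmemH t0))⟩, ?_⟩
      rw [hAdef, ← sUnion_image]
      refine isPreconnected_sUnion (emb t0 z1) _ ?_ ?_
      · rintro s ⟨t, htF, rfl⟩
        exact Or.inl (hmemH t0)
      · rintro s ⟨t, htF, rfl⟩
        exact IsPreconnected.union (emb t z1) (hmemH t) ⟨z1, rfl⟩
          hHconn.isPreconnected (isConnected_range (hcont2 t)).isPreconnected
    set x : ∀ i, X i := emb a z0 with hxdef
    have hxcl : x ∈ closure A := by
      refine map_mem_closure (hcont1 z0) haF ?_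
      intro t ht
      exact mem_biUnion ht (Or.inr ⟨z0, rfl⟩)
    have hA' : IsConnected (insert x A) :=
      hA.subset_closure (subset_insert x A) (insert_subset hxcl subset_closure)
    have hS := hpres _ hA'
    have hxk : x k = a := by rw [hxdef]; exact embk a z0
    have hxj : x j = z0 := by rw [hxdef]; exact embj a z0
    set u : Set (∀ i, Y i) := {y | y k ∈ U ∧ y j ≠ f j z1} with hudef
    have hu : IsOpen u := by
      have : u = (fun y : ∀ i, Y i => y k) ⁻¹' U ∩
          (fun y : ∀ i, Y i => y j) ⁻¹' {f j z1}ᶜ := by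
        rw [hudef]; rfl
      rw [this]
      exact (hU.preimage (continuous_apply k)).inter
        (isOpen_compl_singleton.preimage (continuous_apply j))
    set v : Set (∀ i, Y i) := {(fun i => f i (x i))}ᶜ with hvdef
    have hv : IsOpen v := by rw [hvdef]; exact isOpen_compl_singleton
    have hPxu : (fun i => f i (x i)) ∈ u := by
      rw [hudef]
      refine ⟨?_, ?_⟩
      · show f k (x k) ∈ U
        rw [hxk]; exact ha
      · show f j (x j) ≠ f j z1
        rw [hxj]; exact hz
    have hcover : (fun x i => f i (x i)) '' insert x A ⊆ u ∪ v := by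
      intro y _
      by_cases hy : y = fun i => f i (x i)
      · exact Or.inl (hy ▸ hPxu)
      · exact Or.inr (by rw [hvdef]; exact hy)
    have hne1 : ((fun x i => f i (x i)) '' insert x A ∩ u).Nonempty :=
      ⟨fun i => f i (x i), ⟨x, mem_insert x A, rfl⟩, hPxu⟩
    have hne2 : ((fun x i => f i (x i)) '' insert x A ∩ v).Nonempty := by
      refine ⟨fun i => f i (emb t0 z1 i),
        ⟨emb t0 z1, Or.inr (mem_biUnion ht0 (Or.inl (hmemH t0))), rfl⟩, ?_⟩
      rw [hvdef]
      intro hmem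
      have h2 : f j (emb t0 z1 j) = f j (x j) := congrFun hmem j
      rw [embj, hxj] at h2
      exact hz h2.symm
    obtain ⟨y, hyS, hyuv⟩ := hS.isPreconnected u v hu hv hcover hne1 hne2
    have hyu : y ∈ u := hyuv.1
    have hyv : y ∈ v := hyuv.2
    rw [hudef] at hyu
    rw [hvdef] at hyv
    obtain ⟨w, hw, rfl⟩ := hyS
    rcases hw with rfl | hw
    · exact hyv rfl
    · obtain ⟨t, htF, hw'⟩ := mem_iUnion₂.mp hw
      rcases hw' with ⟨s, rfl⟩ | ⟨u', rfl⟩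
      · have h3 : f j (emb s z1 j) ≠ f j z1 := hyu.2
        rw [embj] at h3
        exact h3 rfl
      · have h3 : f k (emb t u' k) ∈ U := hyu.1
        rw [embk] at h3
        exact htF h3
  exact continuous_pi fun i => (hcont i).comp (continuous_apply i)
end

section
/- Let X_i be connected spaces, Y_i be T1 spaces, and f_i : X_i → Y_i functions with f_i non-constant for at least two distinct indices. Then the product function f = ∏_{i∈I} f_i is connectedness-preserving if and only if every f_i is continuous. -/
open Function Set

private lemma continuous_of_image_closure {α β : Type*} [TopologicalSpace α]
    [TopologicalSpace β] {f : α → β}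
    (h : ∀ s : Set α, f '' closure s ⊆ closure (f '' s)) : Continuous f := by
  rw [continuous_iff_isClosed]
  intro C hC
  have : closure (f ⁻¹' C) ⊆ f ⁻¹' C := by
    intro x hx
    have : f x ∈ closure (f '' (f ⁻¹' C)) := h _ ⟨x, hx, rfl⟩
    have : f x ∈ closure C := closure_mono (Set.image_preimage_subset f C) this
    rwa [hC.closure_eq] at this
  exact isClosed_of_closure_subset this


private lemma key_connP {I : Type*} (X Y : I → Type*)
    [∀ i, TopologicalSpace (X i)] [∀ i, ConnectedSpace (X i)]
    [∀ i, TopologicalSpace (Y i)] [∀ i, T1Space (Y i)]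
    (f : ∀ i, X i → Y i)
    (hconn : ∀ A : Set (∀ i, X i), IsConnected A →
      IsConnected ((fun x i => f i (x i)) '' A))
    (k j : I) (hjk : j ≠ k) (a b : X j) (hab : f j a ≠ f j b) :
    Continuous (f k) := by
  classical
  apply continuous_of_image_closure
  intro S
  rintro _ ⟨p, hp, rfl⟩
  by_contra hfp
  have hSne : S.Nonempty := by
    by_contra h
    rw [not_nonempty_iff_eq_empty] at h
    simp [h] at hp
  have x0 : ∀ i, X i := fun i => Classical.arbitrary (X i)
  set F : (∀ i, X i) → (∀ i, Y i) := fun x i => f i (x i) with hF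
  set e : X k → (∀ i, X i) := fun t => Function.update (Function.update x0 j b) k t with he
  set g : X k → X j → (∀ i, X i) :=
    fun s y => Function.update (Function.update x0 k s) j y with hg
  set q : (∀ i, X i) := Function.update (Function.update x0 j a) k p with hq
  have hce : Continuous e := continuous_const.update k continuous_id
  have hcg : ∀ s, Continuous (g s) := fun s => continuous_const.update j continuous_id
  -- the connected "comb"
  set C : Set (∀ i, X i) := range e ∪ ⋃ s ∈ S, range (g s) with hC
  have hegsb : ∀ s, e s = g s b := fun s => Function.update_comm hjk b s x0
  have hDconn : ∀ s : X k, IsPreconnected (range e ∪ range (g s)) := fun s =>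
    IsPreconnected.union (e s) (mem_range_self _) (by rw [hegsb s]; exact mem_range_self _)
      (isConnected_range hce).isPreconnected (isConnected_range (hcg s)).isPreconnected
  have hCconn : IsConnected C := by
    obtain ⟨s₀, hs₀⟩ := hSne
    refine ⟨⟨e (x0 k), Or.inl (mem_range_self _)⟩, ?_⟩
    have hCeq : C = ⋃₀ ((fun s => range e ∪ range (g s)) '' S) := by
      rw [sUnion_image, hC]
      ext x
      simp only [mem_union, mem_iUnion, exists_prop]
      constructor
      · rintro (hx | ⟨s, hs, hx⟩)
        · exact ⟨s₀, hs₀, Or.inl hx⟩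
        · exact ⟨s, hs, Or.inr hx⟩
      · rintro ⟨s, hs, hx | hx⟩
        · exact Or.inl hx
        · exact Or.inr ⟨s, hs, hx⟩
    rw [hCeq]
    refine isPreconnected_sUnion (e (x0 k)) _ ?_ ?_
    · rintro _ ⟨s, hs, rfl⟩; exact Or.inl (mem_range_self _)
    · rintro _ ⟨s, hs, rfl⟩; exact hDconn s
  -- q is in the closure of C
  set h : X k → (∀ i, X i) := fun t => Function.update (Function.update x0 j a) k t with hh
  have hch : Continuous h := continuous_const.update k continuous_id
  have hhs : ∀ s, h s = g s a := fun s => Function.update_comm hjk a s x0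
  have hqC : q ∈ closure C := by
    have h1 : q ∈ h '' closure S := ⟨p, hp, rfl⟩
    have h2 : h '' closure S ⊆ closure (h '' S) := image_closure_subset_closure_image hch
    refine closure_mono ?_ (h2 h1)
    rintro _ ⟨s, hs, rfl⟩
    rw [hhs s]
    exact Or.inr (mem_biUnion hs (mem_range_self _))
  set A : Set (∀ i, X i) := insert q C with hA
  have hAconn : IsConnected A :=
    hCconn.subset_closure (subset_insert q C)
      (insert_subset hqC subset_closure)
  have hB := hconn A hAconn
  -- now derive the contradiction via a separation of F '' A
  set U₁ : Set (∀ i, Y i) :=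
    (fun y : ∀ i, Y i => y k) ⁻¹' (closure (f k '' S))ᶜ ∩
      (fun y : ∀ i, Y i => y j) ⁻¹' {f j b}ᶜ with hU₁
  set U₂ : Set (∀ i, Y i) := {F q}ᶜ with hU₂
  have hU₁o : IsOpen U₁ :=
    ((isClosed_closure.isOpen_compl).preimage (continuous_apply k)).inter
      ((isClosed_singleton.isOpen_compl).preimage (continuous_apply j))
  have hU₂o : IsOpen U₂ := isClosed_singleton.isOpen_compl
  have hqk : q k = p := by simp [hq]
  have hqj : q j = a := by simp [hq, Function.update_of_ne hjk]
  have hFqU₁ : F q ∈ U₁ := by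
    constructor
    · simpa [hF, hqk] using hfp
    · simp [hF, hqj, hab]
  have hcover : F '' A ⊆ U₁ ∪ U₂ := by
    intro y hy
    by_cases hyq : y = F q
    · exact Or.inl (hyq ▸ hFqU₁)
    · exact Or.inr hyq
  have hU₁B : ∀ y ∈ F '' A, y ∈ U₁ → y = F q := by
    rintro _ ⟨x, hxA, rfl⟩ hyU
    rcases hxA with rfl | hxC
    · rfl
    rcases hxC with ⟨t, rfl⟩ | hx
    · exfalso
      have : (e t) j = b := by simp [he, Function.update_of_ne hjk]
      exact hyU.2 (by simp [hF, this])
    · exfalso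
      simp only [mem_iUnion, exists_prop] at hx
      obtain ⟨s, hs, ⟨y', rfl⟩⟩ := hx
      have : (g s y') k = s := by
        simp [hg, Function.update_of_ne (Ne.symm hjk)]
      exact hyU.1 (subset_closure ⟨s, hs, by simp [hF, this]⟩)
  have hne₁ : (F '' A ∩ U₁).Nonempty := ⟨F q, ⟨q, mem_insert q C, rfl⟩, hFqU₁⟩
  have hne₂ : (F '' A ∩ U₂).Nonempty := by
    refine ⟨F (e (x0 k)), ⟨e (x0 k), Or.inr (Or.inl (mem_range_self _)), rfl⟩, ?_⟩
    simp only [hU₂, mem_compl_iff, mem_singleton_iff]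
    intro hcon
    have hej : (e (x0 k)) j = b := by simp [he, Function.update_of_ne hjk]
    have := congrFun hcon j
    simp only [hF, hej, hqj] at this
    exact hab this.symm
  obtain ⟨y, hyB, hy₁, hy₂⟩ := hB.isPreconnected U₁ U₂ hU₁o hU₂o hcover hne₁ hne₂
  exact hy₂ (hU₁B y hyB hy₁)

theorem connP_product_iff_continuous {I : Type*} (X Y : I → Type*)
    [∀ i, TopologicalSpace (X i)] [∀ i, ConnectedSpace (X i)]
    [∀ i, TopologicalSpace (Y i)] [∀ i, T1Space (Y i)]
    (f : ∀ i, X i → Y i)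
    (hnc : ∃ i j : I, i ≠ j ∧ (∃ a b, f i a ≠ f i b) ∧ (∃ a b, f j a ≠ f j b)) :
    (∀ A : Set (∀ i, X i), IsConnected A →
      IsConnected ((fun x i => f i (x i)) '' A)) ↔ ∀ i, Continuous (f i) := by
  constructor
  · intro hconn k
    obtain ⟨i, j, hij, ⟨a1, b1, h1⟩, ⟨a2, b2, h2⟩⟩ := hnc
    by_cases hk : i = k
    · exact key_connP X Y f hconn k j (by rw [hk] at hij; exact fun h => hij h.symm) a2 b2 h2
    · exact key_connP X Y f hconn k i hk a1 b1 h1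
  · intro hcont A hA
    exact hA.image _ (continuous_pi fun i => (hcont i).comp (continuous_apply i)).continuousOn
end

section
/- If f : X → Y is a connectedness-preserving function from a connected space X to a T1 space Y, f is not continuous, and f is not constant, then the square f × f : X × X → Y × Y is not connectedness-preserving. -/
open Set

theorem square_not_connP {X Y : Type*} [TopologicalSpace X] [ConnectedSpace X]
    [TopologicalSpace Y] [T1Space Y] (f : X → Y)
    (hpres : ∀ A : Set X, IsConnected A → IsConnected (f '' A))
    (hnc : ¬ Continuous f) (hnconst : ∃ a b, f a ≠ f b) :
    ¬ ∀ A : Set (X × X), IsConnected A → IsConnected (Prod.map f f '' A) := by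
  intro h
  obtain ⟨a, b, hab⟩ := hnconst
  -- extract discontinuity data
  rw [continuous_def] at hnc
  push_neg at hnc
  obtain ⟨V, hV, hVo⟩ := hnc
  have hx : ∃ x₀, x₀ ∈ f ⁻¹' V ∧ x₀ ∈ closure (f ⁻¹' V)ᶜ := by
    by_contra hc
    push_neg at hc
    apply hVo
    have : f ⁻¹' V ⊆ interior (f ⁻¹' V) := by
      intro x hxV
      have := hc x hxV
      rw [closure_compl, mem_compl_iff, not_not] at this
      exact this
    have heq : interior (f ⁻¹' V) = f ⁻¹' V := le_antisymm interior_subset this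
    exact heq ▸ isOpen_interior
  obtain ⟨x₀, hx₀V, hx₀cl⟩ := hx
  set S : Set X := (f ⁻¹' V)ᶜ with hS
  have hSne : S.Nonempty := by
    by_contra hSe
    rw [not_nonempty_iff_eq_empty] at hSe
    rw [hSe, closure_empty] at hx₀cl
    exact hx₀cl
  -- the connected set whose image is disconnected
  set L : Set (X × X) := (univ ×ˢ {b}) ∪ (S ×ˢ univ) with hL
  set A : Set (X × X) := L ∪ {(x₀, a)} with hA
  have hLpre : IsPreconnected L := by
    have : L = ⋃ s : S, ((univ ×ˢ ({b} : Set X)) ∪ (({(s : X)} : Set X) ×ˢ univ)) := by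
      ext ⟨x, y⟩
      simp only [hL, mem_union, mem_prod, mem_univ, mem_singleton_iff, mem_iUnion, true_and,
        and_true]
      constructor
      · rintro (rfl | hxS)
        · exact ⟨⟨_, hSne.choose_spec⟩, Or.inl rfl⟩
        · exact ⟨⟨x, hxS⟩, Or.inr rfl⟩
      · rintro ⟨s, rfl | rfl⟩
        · exact Or.inl rfl
        · exact Or.inr s.2
    rw [this]
    apply isPreconnected_iUnion
    · exact ⟨(hSne.choose, b), mem_iInter.mpr fun s => Or.inl ⟨mem_univ _, rfl⟩⟩
    · intro s
      apply IsPreconnected.union ((s : X), b)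
      · simp [mem_prod]
      · simp [mem_prod]
      · exact (isConnected_univ.prod (isConnected_singleton)).isPreconnected
      · exact ((isConnected_singleton).prod isConnected_univ).isPreconnected
  have hApre : IsPreconnected A := by
    apply hLpre.subset_closure subset_union_left
    rintro p (hp | hp)
    · exact subset_closure hp
    · rw [mem_singleton_iff] at hp
      subst hp
      apply closure_mono (subset_union_right (s := univ ×ˢ ({b} : Set X)))
      rw [closure_prod_eq]
      exact ⟨hx₀cl, by simp⟩
  have hAconn : IsConnected A := ⟨⟨(x₀, a), Or.inr rfl⟩, hApre⟩
  have hM := h A hAconn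
  -- disconnect the image
  set U : Set (Y × Y) := V ×ˢ ({f b}ᶜ) with hU
  set W : Set (Y × Y) := (univ ×ˢ ({f a}ᶜ)) ∪ (({f x₀}ᶜ) ×ˢ univ) with hW
  have hUo : IsOpen U := hV.prod isClosed_singleton.isOpen_compl
  have hWo : IsOpen W :=
    (isOpen_univ.prod isClosed_singleton.isOpen_compl).union
      (isClosed_singleton.isOpen_compl.prod isOpen_univ)
  have hcover : Prod.map f f '' A ⊆ U ∪ W := by
    rintro ⟨y1, y2⟩ ⟨⟨x1, x2⟩, hxA, heq⟩
    obtain ⟨rfl, rfl⟩ : f x1 = y1 ∧ f x2 = y2 := by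
      simpa [Prod.map, Prod.ext_iff] using heq
    rcases hxA with ((⟨-, hx2⟩ | ⟨hx1S, -⟩) | hp)
    · -- x2 = b
      rw [mem_singleton_iff] at hx2; subst hx2
      exact Or.inr (Or.inl ⟨mem_univ _, fun hc => hab (mem_singleton_iff.mp hc).symm⟩)
    · -- x1 ∈ S
      by_cases hfa : f x2 = f a
      · refine Or.inr (Or.inr ⟨fun hc => ?_, mem_univ _⟩)
        have hcc : f x1 = f x₀ := hc
        exact hx1S (show x1 ∈ f ⁻¹' V from by rw [mem_preimage, hcc]; exact hx₀V)
      · exact Or.inr (Or.inl ⟨mem_univ _, hfa⟩)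
    · rw [mem_singleton_iff, Prod.ext_iff] at hp
      obtain ⟨rfl, rfl⟩ := hp
      exact Or.inl ⟨hx₀V, fun hc => hab (mem_singleton_iff.mp hc)⟩
  have hUne : (Prod.map f f '' A ∩ U).Nonempty := by
    refine ⟨(f x₀, f a), ⟨(x₀, a), Or.inr rfl, rfl⟩, hx₀V, fun hc => hab (mem_singleton_iff.mp hc)⟩
  have hWne : (Prod.map f f '' A ∩ W).Nonempty := by
    refine ⟨(f x₀, f b), ⟨(x₀, b), Or.inl (Or.inl ⟨mem_univ _, rfl⟩), rfl⟩, ?_⟩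
    exact Or.inl ⟨mem_univ _, fun hc => hab (mem_singleton_iff.mp hc).symm⟩
  obtain ⟨⟨y1, y2⟩, hymem, hyU, hyW⟩ := hM.isPreconnected _ _ hUo hWo hcover hUne hWne
  -- derive contradiction
  obtain ⟨⟨x1, x2⟩, hxA, heq⟩ := hymem
  obtain ⟨rfl, rfl⟩ : f x1 = y1 ∧ f x2 = y2 := by
    simpa [Prod.map, Prod.ext_iff] using heq
  obtain ⟨hy1V, hy2b⟩ := hyU
  rcases hxA with ((⟨-, hx2⟩ | ⟨hx1S, -⟩) | hp)
  · rw [mem_singleton_iff] at hx2; subst hx2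
    exact hy2b rfl
  · exact hx1S hy1V
  · rw [mem_singleton_iff, Prod.ext_iff] at hp
    obtain ⟨rfl, rfl⟩ := hp
    rcases hyW with ⟨-, hc⟩ | ⟨hc, -⟩
    · exact hc rfl
    · exact hc rfl
end

section
/- If f : X → Y is a compactness-preserving function with compact fibers, X is a compact Hausdorff space, and Y is Hausdorff, then f is continuous. -/
theorem compP_compact_fibers_continuous {X Y : Type*}
    [TopologicalSpace X] [CompactSpace X] [T2Space X]
    [TopologicalSpace Y] [T2Space Y] (f : X → Y)
    (hcp : ∀ K : Set X, IsCompact K → IsCompact (f '' K))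
    (hfib : ∀ y : Y, IsCompact (f ⁻¹' {y})) :
    Continuous f := by
  set Γ : Set (X × Y) := {p : X × Y | f p.1 = p.2} with hΓ
  -- Step 1: the graph is closed
  have hclosed : IsClosed Γ := by
    rw [← closure_subset_iff_isClosed]
    intro p hp
    by_contra hne
    -- separate p.1 from the compact fiber f⁻¹{p.2}
    have hfibc : IsCompact (f ⁻¹' {p.2}) := hfib p.2
    have hdisj : Disjoint ({p.1} : Set X) (f ⁻¹' {p.2}) := by
      simp only [Set.disjoint_singleton_left, Set.mem_preimage, Set.mem_singleton_iff]
      exact hne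
    obtain ⟨U, W, hU, hW, hpU, hFW, hUW⟩ :=
      SeparatedNhds.of_isCompact_isCompact isCompact_singleton hfibc hdisj
    -- K = complement of W is compact, f(K) is compact hence closed
    have hKc : IsCompact (Wᶜ : Set X) := hW.isClosed_compl.isCompact
    have hfK : IsCompact (f '' Wᶜ) := hcp _ hKc
    have hfKcl : IsClosed (f '' Wᶜ) := hfK.isClosed
    -- p lies in the closure of Γ ∩ (U ×ˢ univ)
    have hopen : IsOpen (U ×ˢ (Set.univ : Set Y)) := hU.prod isOpen_univ
    have hpmem : p ∈ U ×ˢ (Set.univ : Set Y) := ⟨hpU rfl, trivial⟩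
    have hp2 : p ∈ closure ((U ×ˢ (Set.univ : Set Y)) ∩ Γ) :=
      hopen.inter_closure ⟨hpmem, hp⟩
    -- that set is contained in univ ×ˢ f '' Wᶜ, which is closed
    have hsub : (U ×ˢ (Set.univ : Set Y)) ∩ Γ ⊆ (Set.univ : Set X) ×ˢ (f '' Wᶜ) := by
      rintro ⟨a, b⟩ ⟨⟨haU, -⟩, hab⟩
      refine ⟨trivial, ⟨a, ?_, hab⟩⟩
      intro haW
      exact (Set.disjoint_left.mp hUW) haU haW
    have hcl : IsClosed ((Set.univ : Set X) ×ˢ (f '' Wᶜ)) := isClosed_univ.prod hfKcl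
    have := (closure_minimal hsub hcl) hp2
    obtain ⟨-, z, hzW, hz⟩ := this
    exact hzW (hFW (by simp [hz]))
  -- Step 2: closed graph + compact codomain piece ⇒ continuous
  rw [continuous_iff_isClosed]
  intro C hC
  have key : f ⁻¹' C = Prod.fst '' (Γ ∩ ((Set.univ : Set X) ×ˢ C)) := by
    ext a
    constructor
    · intro ha
      exact ⟨(a, f a), ⟨rfl, trivial, ha⟩, rfl⟩
    · rintro ⟨⟨x, y⟩, ⟨hxy, -, hyC⟩, rfl⟩
      simp only [hΓ, Set.mem_setOf_eq] at hxy
      simpa [Set.mem_preimage, hxy] using hyC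
  rw [key]
  have hsub : Γ ∩ ((Set.univ : Set X) ×ˢ C) ⊆ (Set.univ : Set X) ×ˢ (f '' Set.univ) := by
    rintro ⟨x, y⟩ ⟨hxy, -⟩
    exact ⟨trivial, x, trivial, hxy⟩
  have hbig : IsCompact ((Set.univ : Set X) ×ˢ (f '' Set.univ)) :=
    isCompact_univ.prod (hcp _ isCompact_univ)
  have hc : IsCompact (Γ ∩ ((Set.univ : Set X) ×ˢ C)) :=
    hbig.of_isClosed_subset (hclosed.inter (isClosed_univ.prod hC)) hsub
  exact (hc.image continuous_fst).isClosed
end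

section
/- There exists a compactness-preserving surjection f : [0,1] → ω+1 (the ordinal space ω+1, i.e., a convergent sequence with its limit) such that the square f × f : [0,1]² → (ω+1)² is not compactness-preserving. -/
/-!
Send `0` to `∞`, `1 / (n + 1)` to `n`, and more generally `x ≠ 0` to `⌊1 / x⌋ - 1`. A compact set
either contains `0`, and then its image contains `∞` and is closed in `ℕ∞`, or it stays away from
`0`, and then its image is finite. The square fails along the compact set made of
`(1/2 + 1/(2n + 2), 1/(n + 1))` and its limit `(1/2, 0)`: the image consists of the points `(0, n)`
and `(1, ∞)`, so it misses the limit `(0, ∞)` of the points `(0, n)` and is not closed.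
-/

open Set Filter Topology

namespace ENat

theorem isCompact_of_top_mem {S : Set ℕ∞} (h : ⊤ ∈ S) : IsCompact S := by
  refine IsClosed.isCompact (isOpen_compl_iff.mp (isOpen_iff_mem_nhds.mpr fun x hx => ?_))
  exact (mem_nhds_iff (ne_of_mem_of_not_mem h hx).symm).mpr hx

theorem isCompact_of_forall_le {S : Set ℕ∞} {N : ℕ} (h : ∀ x ∈ S, x ≤ N) : IsCompact S :=
  (finite_of_sSup_lt_top ((sSup_le h).trans_lt (natCast_lt_top N))).isCompact

end ENat

theorem exists_isCompact_not_isCompact_image_prodMap {X Y : Type*} [TopologicalSpace X]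
    [TopologicalSpace Y] [T2Space Y] {f : X → Y} {p q : X} {t s : ℕ → X} {b : Y}
    (ht : Tendsto t atTop (𝓝 p)) (hs : Tendsto s atTop (𝓝 q)) (hft : ∀ n, f (t n) = b)
    (hbp : b ≠ f p) (hfs : Tendsto (f ∘ s) atTop (𝓝 (f q))) (hsq : ∀ n, f (s n) ≠ f q) :
    ∃ K : Set (X × X), IsCompact K ∧ ¬ IsCompact (Prod.map f f '' K) := by
  refine ⟨_, (ht.prodMk_nhds hs).isCompact_insert_range, fun hK => ?_⟩
  have hlim : Tendsto (fun n => (b, f (s n))) atTop (𝓝 (b, f q)) :=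
    tendsto_const_nhds.prodMk_nhds hfs
  have hmem : (b, f q) ∈ Prod.map f f '' insert (p, q) (range fun n => (t n, s n)) := by
    refine hK.isClosed.closure_subset (mem_closure_of_tendsto hlim (.of_forall fun n => ?_))
    exact ⟨(t n, s n), Or.inr ⟨n, rfl⟩, by simp [hft]⟩
  obtain ⟨_, rfl | ⟨n, rfl⟩, h⟩ := hmem
  · exact hbp (congrArg Prod.fst h).symm
  · exact hsq n (congrArg Prod.snd h)

noncomputable def recipFloor (x : ℝ) : ℕ∞ :=
  if x = 0 then ⊤ else (⌊x⁻¹⌋₊ - 1 : ℕ)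

theorem recipFloor_zero : recipFloor 0 = ⊤ := if_pos rfl

theorem recipFloor_of_half_lt {x : ℝ} (hx : 1 / 2 < x) (hx1 : x ≤ 1) : recipFloor x = 0 := by
  have hx0 : 0 < x := by linarith
  have hfloor : ⌊x⁻¹⌋₊ = 1 := by
    rw [Nat.floor_eq_iff (by positivity), Nat.cast_one, one_add_one_eq_two]
    refine ⟨one_le_inv_iff₀.mpr ⟨hx0, hx1⟩, ?_⟩
    rw [inv_lt_comm₀ hx0 two_pos]
    linarith
  simp [recipFloor, hx0.ne', hfloor]

theorem recipFloor_le_of_le_abs {x ε : ℝ} (hε : 0 < ε) (hx : ε ≤ |x|) :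
    recipFloor x ≤ ⌊ε⁻¹⌋₊ := by
  have hx0 : x ≠ 0 := abs_pos.mp (hε.trans_le hx)
  have hinv : x⁻¹ ≤ ε⁻¹ :=
    calc x⁻¹ ≤ |x|⁻¹ := abs_inv x ▸ le_abs_self x⁻¹
      _ ≤ ε⁻¹ := inv_anti₀ hε hx
  rw [recipFloor, if_neg hx0, Nat.cast_le]
  exact (Nat.sub_le _ _).trans (Nat.floor_le_floor hinv)

theorem isCompact_image_recipFloor {K : Set ℝ} (hK : IsCompact K) :
    IsCompact (recipFloor '' K) := by
  by_cases h0 : (0 : ℝ) ∈ K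
  · exact ENat.isCompact_of_top_mem ⟨0, h0, recipFloor_zero⟩
  obtain ⟨ε, hε, hball⟩ := Metric.isOpen_iff.mp hK.isClosed.isOpen_compl 0 h0
  refine ENat.isCompact_of_forall_le (N := ⌊ε⁻¹⌋₊) ?_
  rintro _ ⟨x, hx, rfl⟩
  refine recipFloor_le_of_le_abs hε (not_lt.mp fun hlt => hball ?_ hx)
  rwa [mem_ball_zero_iff, Real.norm_eq_abs]

noncomputable def invSucc (n : ℕ) : Icc (0 : ℝ) 1 :=
  ⟨((n : ℝ) + 1)⁻¹, by positivity, inv_le_one_of_one_le₀ (by simp)⟩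

noncomputable def avgOneInvSucc (n : ℕ) : Icc (0 : ℝ) 1 :=
  ⟨(1 + (invSucc n : ℝ)) / 2, by linarith [(invSucc n).2.1], by linarith [(invSucc n).2.2]⟩

theorem tendsto_invSucc : Tendsto invSucc atTop (𝓝 0) := by
  rw [tendsto_subtype_rng]
  simpa [invSucc] using tendsto_one_div_add_atTop_nhds_zero_nat (𝕜 := ℝ)

theorem tendsto_avgOneInvSucc : Tendsto avgOneInvSucc atTop (𝓝 (invSucc 1)) := by
  have hlim : ((invSucc 1 : Icc (0 : ℝ) 1) : ℝ) = (1 + ((0 : Icc (0 : ℝ) 1) : ℝ)) / 2 := by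
    norm_num [invSucc]
  rw [tendsto_subtype_rng, hlim]
  exact ((tendsto_subtype_rng.mp tendsto_invSucc).const_add 1).div_const 2

theorem recipFloor_invSucc (n : ℕ) : recipFloor (invSucc n) = n := by
  rw [invSucc, recipFloor, if_neg (by positivity), inv_inv, ← Nat.cast_add_one,
    Nat.floor_natCast]
  simp

theorem recipFloor_avgOneInvSucc (n : ℕ) : recipFloor (avgOneInvSucc n) = 0 := by
  have hpos : (0 : ℝ) < invSucc n := by simp only [invSucc]; positivity
  exact recipFloor_of_half_lt (by simp only [avgOneInvSucc]; linarith)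
    (by simp only [avgOneInvSucc]; linarith [(invSucc n).2.2])

theorem exists_compP_surjection_square_not_compP :
    ∃ f : Set.Icc (0:ℝ) 1 → ℕ∞,
      Function.Surjective f ∧
      (∀ K : Set (Set.Icc (0:ℝ) 1), IsCompact K → IsCompact (f '' K)) ∧
      ¬ ∀ K : Set (Set.Icc (0:ℝ) 1 × Set.Icc (0:ℝ) 1), IsCompact K →
          IsCompact (Prod.map f f '' K) := by
  refine ⟨fun x => recipFloor x, ?_, fun K hK => ?_, fun hsquare => ?_⟩
  · exact ENat.recTopCoe ⟨0, recipFloor_zero⟩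
      fun n => ⟨invSucc n, recipFloor_invSucc n⟩
  · simpa only [image_image] using isCompact_image_recipFloor (hK.image continuous_subtype_val)
  · obtain ⟨K, hK, hnot⟩ := exists_isCompact_not_isCompact_image_prodMap
      (f := fun x : Icc (0 : ℝ) 1 => recipFloor x) (b := 0) tendsto_avgOneInvSucc tendsto_invSucc
      recipFloor_avgOneInvSucc (by simp [recipFloor_invSucc])
      (by simpa [Function.comp_def, recipFloor_invSucc, recipFloor_zero]
        using ENat.tendsto_natCast_nhds_top)
      (fun n => by simp [recipFloor_invSucc, recipFloor_zero])
    exact hnot (hsquare K hK)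
end

section
/- More generally, if X and Y are connected linearly ordered topological spaces, then every continuum-preserving function f : X → Y is connectedness-preserving. -/
/-!
A connected linearly ordered space is densely ordered and conditionally complete: if a nonempty
bounded set had no supremum, its set of upper bounds would be a proper nonempty clopen set. Hence
every closed interval is a continuum. Two points `a, b` of a connected set `A` span the interval
`[a, b] ⊆ A`, whose image is connected and contains `f a` and `f b`; so `f '' A` is connected.
-/

open Set

section
variable {X : Type*} [LinearOrder X] [TopologicalSpace X] [OrderTopology X] [PreconnectedSpace X]

theorem PreconnectedSpace.exists_isLUB {s : Set X} (hne : s.Nonempty) (hbdd : BddAbove s) :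
    ∃ x, IsLUB s x := by
  by_contra! hno
  have hopen : IsOpen (upperBounds s) := isOpen_iff_mem_nhds.2 fun x hx => by
    obtain ⟨b, hb, hbx⟩ : ∃ b ∈ upperBounds s, b < x := by
      simpa [IsLUB, IsLeast, lowerBounds, hx] using hno x
    exact Filter.mem_of_superset (Ioi_mem_nhds hbx) fun y hy z hz => (hb hz).trans hy.le
  have hclosed : IsClosed (upperBounds s) := by
    rw [show upperBounds s = ⋂ y ∈ s, Ici y by ext; simp [upperBounds]]
    exact isClosed_biInter fun y _ => isClosed_Ici
  have huniv : upperBounds s = univ :=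
    (isClopen_iff.1 ⟨hclosed, hopen⟩).resolve_left hbdd.ne_empty
  obtain ⟨y, hy⟩ := hne
  exact hno y ⟨huniv ▸ mem_univ y, fun b hb => hb hy⟩

theorem PreconnectedSpace.exists_isGLB {s : Set X} (hne : s.Nonempty) (hbdd : BddBelow s) :
    ∃ x, IsGLB s x :=
  let ⟨x, hx⟩ := exists_isLUB hbdd hne.bddAbove_lowerBounds
  ⟨x, isLUB_lowerBounds.mp hx⟩

open Classical in
noncomputable abbrev PreconnectedSpace.toConditionallyCompleteLinearOrder [Nonempty X] :
    ConditionallyCompleteLinearOrder X where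
  __ := ‹LinearOrder X›
  __ := LinearOrder.toLattice
  sSup s :=
    if h : s.Nonempty ∧ BddAbove s then (exists_isLUB h.1 h.2).choose else Classical.arbitrary X
  sInf s :=
    if h : s.Nonempty ∧ BddBelow s then (exists_isGLB h.1 h.2).choose else Classical.arbitrary X
  isLUB_csSup s hne hbdd := by
    simp only [dif_pos (And.intro hne hbdd)]; exact (exists_isLUB hne hbdd).choose_spec
  isGLB_csInf s hne hbdd := by
    simp only [dif_pos (And.intro hne hbdd)]; exact (exists_isGLB hne hbdd).choose_spec
  csSup_of_not_bddAbove s hs := by simp [hs]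
  csInf_of_not_bddBelow s hs := by simp [hs]

theorem PreconnectedSpace.isCompact_Icc (a b : X) : IsCompact (Icc a b) :=
  haveI : Nonempty X := ⟨a⟩
  letI := PreconnectedSpace.toConditionallyCompleteLinearOrder (X := X)
  CompactIccSpace.isCompact_Icc

theorem PreconnectedSpace.isPreconnected_Icc (a b : X) : IsPreconnected (Icc a b) :=
  haveI : Nonempty X := ⟨a⟩
  letI := PreconnectedSpace.toConditionallyCompleteLinearOrder (X := X)
  haveI := denselyOrdered_of_preconnectedSpace (α := X)
  _root_.isPreconnected_Icc
end

theorem continuumP_implies_connP_LOTS_general {X Y : Type*}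
    [LinearOrder X] [TopologicalSpace X] [OrderTopology X] [ConnectedSpace X]
    [TopologicalSpace Y]
    (f : X → Y)
    (hcp : ∀ K : Set X, IsCompact K → IsConnected K →
      IsCompact (f '' K) ∧ IsConnected (f '' K)) :
    ∀ A : Set X, IsConnected A → IsConnected (f '' A) := by
  rintro A ⟨hne, hA⟩
  refine ⟨hne.image f, isPreconnected_of_forall_pair ?_⟩
  rintro _ ⟨a, ha, rfl⟩ _ ⟨b, hb, rfl⟩
  have hK : IsConnected (uIcc a b) :=
    ⟨nonempty_uIcc, PreconnectedSpace.isPreconnected_Icc _ _⟩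
  exact ⟨f '' uIcc a b, image_mono (hA.ordConnected.uIcc_subset ha hb),
    mem_image_of_mem f left_mem_uIcc, mem_image_of_mem f right_mem_uIcc,
    (hcp _ (PreconnectedSpace.isCompact_Icc _ _) hK).2.2⟩

theorem continuumP_implies_connP_LOTS {X Y : Type*}
    [LinearOrder X] [TopologicalSpace X] [OrderTopology X] [ConnectedSpace X]
    [LinearOrder Y] [TopologicalSpace Y] [OrderTopology Y] [ConnectedSpace Y]
    (f : X → Y)
    (hcp : ∀ K : Set X, IsCompact K → IsConnected K →
      IsCompact (f '' K) ∧ IsConnected (f '' K)) :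
    ∀ A : Set X, IsConnected A → IsConnected (f '' A) :=
  continuumP_implies_connP_LOTS_general f hcp
end

section
/- There exists a function f : [0,1] → [0,1] that is continuum-preserving but whose square f × f : [0,1]² → [0,1]² is not connectedness-preserving; in fact there is an arc J ⊆ [0,1]² whose image under f × f is not compact. -/
/-!
Let `c ∈ (0, 1)` be irrational and `π : ℝ → ℝ ⧸ ℚ` the quotient map. Every nondegenerate interval
meets every coset of `ℚ`, so if `τ : ℝ ⧸ ℚ → [0, 1]` is onto, `f = τ ∘ π` maps every nondegenerate
connected set onto `[0, 1]` and hence preserves continua. On the arc `J = {(s, s + c)}` the map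
`f × f` takes exactly the values `(τ C, τ (C + π c))`. Since `ℝ ⧸ ℚ` has continuum many orbits under
translation by `π c`, `τ` can be chosen onto, equal to a sequence `a n ∈ (1/2, 1]` tending to `1/2`
along the orbit `n • π c`, and vanishing off one representative of every other orbit. Then every
value of `f × f` on `J` has a zero coordinate or both coordinates `> 1/2`, while `(1/2, 1/2)` is a
limit of the values `(a n, a (n + 1))`: the image of `J` is neither closed nor connected.
-/

open Set Filter Topology Function AddSubgroup

universe u

open Cardinal in
theorem AddSubgroup.mk_quotient_eq_of_countable {G : Type*} [AddGroup G] (H : AddSubgroup G)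
    [Countable H] (hG : ℵ₀ < #G) : #(G ⧸ H) = #G := by
  refine mk_quotient_le.antisymm (not_lt.1 fun (hlt : #(G ⧸ H) < #G) => ?_)
  have hprod : #G = #(G ⧸ H) * #H := by
    rw [mk_congr addGroupEquivQuotientProdAddSubgroup, mk_prod, lift_id, lift_id]
  have := mul_lt_of_lt hG.le hlt ((mk_le_aleph0 (α := H)).trans_lt hG)
  rw [← hprod] at this
  exact this.false

open Cardinal Classical in
theorem exists_surjective_zsmul_eq_and_eq_zero_or_add_eq_zero {V Y : Type u} [AddCommGroup V]
    [Zero Y] {v : V} (hv : Injective fun n : ℤ => n • v)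
    (hY : #Y ≤ #{Q : V ⧸ zmultiples v // Q ≠ 0}) (a : ℤ → Y) :
    ∃ τ : V → Y, Surjective τ ∧ (∀ n : ℤ, τ (n • v) = a n) ∧
      ∀ C ∉ zmultiples v, τ C = 0 ∨ τ (C + v) = 0 := by
  obtain ⟨e⟩ := (le_def _ _).1 hY
  have hσ : Surjective (invFun e) := invFun_surjective e.injective
  -- On a coset other than `zmultiples v` only the chosen representative may take a nonzero
  -- value; `C` and `C + v` are distinct points of one coset, so one of them vanishes.
  let rep : V → Y := fun C =>
    if h : (C : V ⧸ zmultiples v) ≠ 0 ∧ (C : V ⧸ zmultiples v).out = C then invFun e ⟨_, h.1⟩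
    else 0
  have hext {C : V} (hC : C ∉ zmultiples v) : extend (· • v) a rep C = rep C :=
    extend_apply' _ _ _ (mem_zmultiples_iff.not.1 hC)
  refine ⟨extend (· • v) a rep, fun y => ?_, hv.extend_apply a rep, fun C hC => ?_⟩
  · obtain ⟨⟨Q, hQ⟩, rfl⟩ := hσ y
    have hout : (Q.out : V ⧸ zmultiples v) = Q := QuotientAddGroup.out_eq' Q
    have hQ' : Q.out ∉ zmultiples v := by
      rw [← QuotientAddGroup.eq_zero_iff, hout]; exact hQ
    refine ⟨Q.out, ?_⟩
    rw [hext hQ']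
    simp only [rep, hout]
    rw [dif_pos ⟨hQ, trivial⟩]
  · have hv₀ : v ≠ 0 := by simpa using hv.ne (a₁ := 1) (a₂ := 0) one_ne_zero
    have hCv : C + v ∉ zmultiples v := fun h => hC (by simpa using sub_mem h (mem_zmultiples v))
    have hmk : ((C + v : V) : V ⧸ zmultiples v) = C := by
      rw [QuotientAddGroup.mk_add, (QuotientAddGroup.eq_zero_iff _).2 (mem_zmultiples v), add_zero]
    rw [hext hC, hext hCv]
    by_cases hrep : (C : V ⧸ zmultiples v).out = C
    · right
      simp only [rep, hmk, hrep]
      exact dif_neg fun h => hv₀ (by simpa using h.2)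
    · left
      exact dif_neg fun h => hrep h.2

noncomputable def ratSubgroup : AddSubgroup ℝ := (Rat.castHom ℝ : ℚ →+ ℝ).range

theorem mem_ratSubgroup {x : ℝ} : x ∈ ratSubgroup ↔ ∃ q : ℚ, (q : ℝ) = x :=
  AddMonoidHom.mem_range

instance : Countable ratSubgroup := by
  have : (ratSubgroup : Set ℝ) = range ((↑) : ℚ → ℝ) := AddMonoidHom.coe_range _
  exact (this ▸ countable_range _ : (ratSubgroup : Set ℝ).Countable).to_subtype

theorem image_mk_Ioo_eq_univ {x y : ℝ} (h : x < y) :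
    ((↑) : ℝ → ℝ ⧸ ratSubgroup) '' Ioo x y = univ := by
  refine eq_univ_of_forall fun C => ?_
  induction C using QuotientAddGroup.induction_on with | H r => ?_
  obtain ⟨q, hq₁, hq₂⟩ := exists_rat_btwn (sub_lt_sub_right h r)
  refine ⟨r + q, ⟨by linarith, by linarith⟩, ?_⟩
  rw [QuotientAddGroup.mk_add, (QuotientAddGroup.eq_zero_iff _).2 (mem_ratSubgroup.2 ⟨q, rfl⟩),
    add_zero]

theorem injective_zsmul_mk_of_irrational {c : ℝ} (hc : Irrational c) :
    Injective fun n : ℤ => n • (c : ℝ ⧸ ratSubgroup) := by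
  intro m n h
  by_contra hmn
  have hsub : (((m - n : ℤ) : ℝ) * c : ℝ) ∈ ratSubgroup := by
    rw [← QuotientAddGroup.eq_zero_iff, ← zsmul_eq_mul, QuotientAddGroup.mk_zsmul, sub_zsmul]
    exact sub_eq_zero.2 h
  obtain ⟨q, hq⟩ := mem_ratSubgroup.1 hsub
  exact hc.intCast_mul (sub_ne_zero.2 hmn) ⟨q, hq⟩

open Cardinal in
theorem mk_Icc_le_mk_quotient_zmultiples_ne_zero (v : ℝ ⧸ ratSubgroup) :
    #(Icc (0:ℝ) 1) ≤ #{Q : (ℝ ⧸ ratSubgroup) ⧸ zmultiples v // Q ≠ 0} := by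
  have hV : #(ℝ ⧸ ratSubgroup) = 𝔠 := by
    rw [mk_quotient_eq_of_countable _ (mk_real ▸ aleph0_lt_continuum), mk_real]
  have hQ : #((ℝ ⧸ ratSubgroup) ⧸ zmultiples v) = 𝔠 := by
    rw [mk_quotient_eq_of_countable _ (hV ▸ aleph0_lt_continuum), hV]
  have : Infinite ((ℝ ⧸ ratSubgroup) ⧸ zmultiples v) := infinite_iff.2 (hQ ▸ aleph0_le_continuum)
  have hcompl : #({0}ᶜ : Set ((ℝ ⧸ ratSubgroup) ⧸ zmultiples v)) = 𝔠 := by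
    refine (mk_compl_of_infinite _ ?_).trans hQ
    rw [mk_singleton, hQ]
    exact one_lt_aleph0.trans aleph0_lt_continuum
  calc #(Icc (0:ℝ) 1) ≤ #ℝ := mk_set_le _
    _ = #({0}ᶜ : Set ((ℝ ⧸ ratSubgroup) ⧸ zmultiples v)) := by rw [mk_real, hcompl]

theorem image_eq_univ_of_forall_image_Ioo_eq_univ {Y : Type*} {g : ℝ → Y}
    (hg : ∀ x y, x < y → g '' Ioo x y = univ) {K : Set ℝ} (hK : IsPreconnected K)
    (hKnt : K.Nontrivial) : g '' K = univ := by
  obtain ⟨x, hx, y, hy, hxy⟩ := hKnt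
  wlog h : x < y generalizing x y
  · exact this y hy x hx hxy.symm (hxy.lt_or_gt.resolve_left h)
  exact eq_univ_of_univ_subset <|
    (hg x y h).symm.subset.trans (image_mono (Ioo_subset_Icc_self.trans (hK.Icc_subset hx hy)))

theorem isCompact_image_and_isConnected_image {Y : Type*} [TopologicalSpace Y] [CompactSpace Y]
    [ConnectedSpace Y] {g : ℝ → Y} (hg : ∀ x y, x < y → g '' Ioo x y = univ) {s : Set ℝ}
    {K : Set s} (hK : IsConnected K) :
    IsCompact ((fun x : s => g x) '' K) ∧ IsConnected ((fun x : s => g x) '' K) := by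
  rcases K.subsingleton_or_nontrivial with hKs | hKnt
  · obtain ⟨x, hx⟩ := hK.nonempty
    rw [hKs.eq_singleton_of_mem hx, image_singleton]
    exact ⟨isCompact_singleton, isConnected_singleton⟩
  · rw [← image_image, image_eq_univ_of_forall_image_Ioo_eq_univ hg
      (hK.isPreconnected.image _ continuous_subtype_val.continuousOn)
      (hKnt.image Subtype.val_injective)]
    exact ⟨isCompact_univ, isConnected_univ⟩

def shiftedDiagonal (c : ℝ) (hc₀ : 0 ≤ c) (hc₁ : c ≤ 1) (t : Icc (0:ℝ) 1) :
    Icc (0:ℝ) 1 × Icc (0:ℝ) 1 :=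
  (⟨(1 - c) * t, by constructor <;> nlinarith [t.2.1, t.2.2]⟩,
    ⟨(1 - c) * t + c, by constructor <;> nlinarith [t.2.1, t.2.2]⟩)

theorem continuous_shiftedDiagonal {c : ℝ} (hc₀ : 0 ≤ c) (hc₁ : c ≤ 1) :
    Continuous (shiftedDiagonal c hc₀ hc₁) := by
  unfold shiftedDiagonal; fun_prop

theorem nonempty_homeomorph_range_shiftedDiagonal {c : ℝ} (hc₀ : 0 ≤ c) (hc₁ : c < 1) :
    Nonempty (Icc (0:ℝ) 1 ≃ₜ range (shiftedDiagonal c hc₀ hc₁.le)) := by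
  have hinj : Injective (shiftedDiagonal c hc₀ hc₁.le) := fun s t h =>
    Subtype.ext (mul_left_cancel₀ (sub_ne_zero.2 hc₁.ne') (congrArg (fun p => (p.1 : ℝ)) h))
  exact ⟨((continuous_shiftedDiagonal hc₀ hc₁.le).isClosedEmbedding hinj).isEmbedding.toHomeomorph⟩

theorem image_range_shiftedDiagonal {Y : Type*} (τ : ℝ ⧸ ratSubgroup → Y) {c : ℝ} (hc₀ : 0 ≤ c)
    (hc₁ : c < 1) :
    Prod.map (fun x : Icc (0:ℝ) 1 => τ (x : ℝ)) (fun x : Icc (0:ℝ) 1 => τ (x : ℝ)) ''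
        range (shiftedDiagonal c hc₀ hc₁.le) =
      range fun C => (τ C, τ (C + (c : ℝ ⧸ ratSubgroup))) := by
  rw [← range_comp]
  ext p
  constructor
  · rintro ⟨t, rfl⟩
    exact ⟨((1 - c) * t : ℝ), by simp [shiftedDiagonal, QuotientAddGroup.mk_add]⟩
  · rintro ⟨C, rfl⟩
    obtain ⟨s, ⟨hs₀, hs₁⟩, rfl⟩ := (image_mk_Ioo_eq_univ (sub_pos.2 hc₁)).symm ▸ mem_univ C
    have hc : 0 < 1 - c := sub_pos.2 hc₁
    refine ⟨⟨s / (1 - c), div_nonneg hs₀.le hc.le, (div_le_one hc).2 hs₁.le⟩, ?_⟩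
    simp [shiftedDiagonal, QuotientAddGroup.mk_add, mul_div_cancel₀ _ hc.ne']

theorem exists_half_lt_tendsto_half :
    ∃ a : ℤ → Icc (0:ℝ) 1, (∀ n, 1 / 2 < (a n : ℝ)) ∧
      Tendsto (fun k : ℕ => (a k : ℝ)) atTop (𝓝 (1 / 2)) := by
  have hpos (m : ℕ) : 0 < 1 / (2 * ((m : ℝ) + 1)) := by positivity
  have hle (m : ℕ) : 1 / (2 * ((m : ℝ) + 1)) ≤ 1 / 2 := by
    gcongr; linarith [m.cast_nonneg (α := ℝ)]
  have hmem (m : ℕ) : 1 / 2 + 1 / (2 * ((m : ℝ) + 1)) ∈ Icc (0:ℝ) 1 :=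
    ⟨by linarith [hpos m], by linarith [hle m]⟩
  have hlim : Tendsto (fun k : ℕ => 1 / 2 + 1 / (2 * ((k : ℝ) + 1))) atTop (𝓝 (1 / 2)) := by
    have := ((tendsto_one_div_add_atTop_nhds_zero_nat (𝕜 := ℝ)).const_mul (1 / 2)).const_add (1 / 2)
    rw [mul_zero, add_zero] at this
    exact this.congr fun k => by rw [one_div_mul_one_div]
  exact ⟨fun n => ⟨_, hmem n.toNat⟩, fun n => by simpa using hpos n.toNat, by simpa using hlim⟩

section PairsAlongOrbit

variable {V : Type*} [AddCommGroup V] {v : V} {τ : V → Icc (0:ℝ) 1} {a : ℤ → Icc (0:ℝ) 1}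

theorem eq_zero_or_eq_zero_or_half_lt (hτa : ∀ n : ℤ, τ (n • v) = a n)
    (hτ0 : ∀ C ∉ zmultiples v, τ C = 0 ∨ τ (C + v) = 0) (ha : ∀ n, 1 / 2 < (a n : ℝ)) (C : V) :
    (τ C : ℝ) = 0 ∨ (τ (C + v) : ℝ) = 0 ∨ 1 / 2 < (τ C : ℝ) ∧ 1 / 2 < (τ (C + v) : ℝ) := by
  by_cases hC : C ∈ zmultiples v
  · obtain ⟨n, rfl⟩ := mem_zmultiples_iff.1 hC
    rw [← add_one_zsmul, hτa, hτa]
    exact Or.inr (Or.inr ⟨ha n, ha (n + 1)⟩)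
  · simpa only [Icc.coe_eq_zero, or_assoc] using Or.inl (hτ0 C hC)

theorem not_isCompact_range_pair (hτa : ∀ n : ℤ, τ (n • v) = a n)
    (hτ0 : ∀ C ∉ zmultiples v, τ C = 0 ∨ τ (C + v) = 0) (ha : ∀ n, 1 / 2 < (a n : ℝ))
    (hlim : Tendsto (fun k : ℕ => (a k : ℝ)) atTop (𝓝 (1 / 2))) :
    ¬IsCompact (range fun C => (τ C, τ (C + v))) := by
  intro hcomp
  let half : Icc (0:ℝ) 1 := ⟨1 / 2, by norm_num, by norm_num⟩
  have hpairs : Tendsto (fun k : ℕ => (τ ((k : ℤ) • v), τ ((k : ℤ) • v + v))) atTop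
      (𝓝 (half, half)) := by
    refine .prodMk_nhds (tendsto_subtype_rng.2 ?_) (tendsto_subtype_rng.2 ?_)
    · simpa only [hτa] using hlim
    · refine (hlim.comp (tendsto_add_atTop_nat 1)).congr fun k => ?_
      rw [comp_apply, ← add_one_zsmul, hτa, Nat.cast_succ]
  obtain ⟨C, hC⟩ := hcomp.isClosed.mem_of_tendsto hpairs (.of_forall fun k => mem_range_self _)
  simp only [Prod.ext_iff] at hC
  rcases eq_zero_or_eq_zero_or_half_lt hτa hτ0 ha C with h | h | h <;>
    simp only [hC.1, hC.2, half] at h <;> norm_num at h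

theorem not_isPreconnected_range_pair (hτa : ∀ n : ℤ, τ (n • v) = a n)
    (hτ0 : ∀ C ∉ zmultiples v, τ C = 0 ∨ τ (C + v) = 0) (ha : ∀ n, 1 / 2 < (a n : ℝ))
    {C₀ : V} (hC₀ : τ C₀ = 0) :
    ¬IsPreconnected (range fun C => (τ C, τ (C + v))) := by
  intro hconn
  let m : Icc (0:ℝ) 1 × Icc (0:ℝ) 1 → ℝ := fun p => min (p.1 : ℝ) p.2
  have hm := (hconn.image m (by fun_prop)).Icc_subset (mem_image_of_mem m (mem_range_self C₀))
    (mem_image_of_mem m (mem_range_self 0))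
  have hquarter : (1 / 4 : ℝ) ∈ Icc (m (τ C₀, τ (C₀ + v))) (m (τ 0, τ (0 + v))) := by
    have h₀ : τ 0 = a 0 := by simpa using hτa 0
    have h₁ : τ (0 + v) = a 1 := by simpa using hτa 1
    simp only [m, hC₀, h₀, h₁, Icc.coe_zero]
    constructor
    · exact (min_le_left _ _).trans (by norm_num)
    · exact le_min (by linarith [ha 0]) (by linarith [ha 1])
  obtain ⟨_, ⟨C, rfl⟩, hC⟩ := hm hquarter
  rcases eq_zero_or_eq_zero_or_half_lt hτa hτ0 ha C with h | h | ⟨h₁, h₂⟩ <;> simp only [m] at hC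
  · linarith [min_le_left (τ C : ℝ) (τ (C + v))]
  · linarith [min_le_right (τ C : ℝ) (τ (C + v))]
  · linarith [lt_min h₁ h₂]

end PairsAlongOrbit

theorem exists_continuumP_square_not_connP :
    ∃ f : Set.Icc (0:ℝ) 1 → Set.Icc (0:ℝ) 1,
      (∀ K : Set (Set.Icc (0:ℝ) 1), IsCompact K → IsConnected K →
        IsCompact (f '' K) ∧ IsConnected (f '' K)) ∧
      (∃ J : Set (Set.Icc (0:ℝ) 1 × Set.Icc (0:ℝ) 1),
        Nonempty (Set.Icc (0:ℝ) 1 ≃ₜ J) ∧ ¬ IsCompact (Prod.map f f '' J)) ∧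
      ¬ ∀ A : Set (Set.Icc (0:ℝ) 1 × Set.Icc (0:ℝ) 1), IsConnected A →
          IsConnected (Prod.map f f '' A) := by
  obtain ⟨c, hc, hc₀, hc₁⟩ := exists_irrational_btwn (zero_lt_one' ℝ)
  obtain ⟨a, ha, hlim⟩ := exists_half_lt_tendsto_half
  obtain ⟨τ, hτ, hτa, hτ0⟩ := exists_surjective_zsmul_eq_and_eq_zero_or_add_eq_zero
    (injective_zsmul_mk_of_irrational hc) (mk_Icc_le_mk_quotient_zmultiples_ne_zero _) a
  obtain ⟨C₀, hC₀⟩ := hτ 0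
  have himage := image_range_shiftedDiagonal τ hc₀.le hc₁
  have hJ := isConnected_range (continuous_shiftedDiagonal hc₀.le hc₁.le)
  refine ⟨fun x => τ (x : ℝ), fun K _ hK => isCompact_image_and_isConnected_image
      (g := fun r => τ r) (fun x y hxy => by
        rw [← image_image, image_mk_Ioo_eq_univ hxy, image_univ_of_surjective hτ]) hK,
    ⟨_, nonempty_homeomorph_range_shiftedDiagonal hc₀.le hc₁,
      himage ▸ not_isCompact_range_pair hτa hτ0 ha hlim⟩, fun h => ?_⟩
  exact not_isPreconnected_range_pair hτa hτ0 ha hC₀ (himage ▸ (h _ hJ).isPreconnected)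
end

section
/- There exists a function f : [0,1] → [0,1] which is connectedness-preserving but not continuum-preserving. -/
/-!
Every coset of `ℚ` in `ℝ` is dense, and there are continuum many cosets. Composing the quotient
map `ℝ → ℝ/ℚ` with a surjection `ℝ/ℚ → [0,1)` gives a map sending every nondegenerate interval
onto all of `[0,1)`. Hence every connected subset of `[0,1]` is sent either to a point or onto the
connected set `[0,1)`; but `[0,1]` itself, a continuum, is also sent onto `[0,1)`, which is not
compact.
-/

open Set Cardinal

noncomputable def ratCastRange : AddSubgroup ℝ := (Rat.castHom ℝ : ℚ →+ ℝ).range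

lemma ratCast_mem_ratCastRange (q : ℚ) : (q : ℝ) ∈ ratCastRange := ⟨q, rfl⟩

lemma mk_ratCastRange_le : #ratCastRange ≤ ℵ₀ :=
  (mk_le_of_surjective (f := fun q : ℚ => (⟨q, ratCast_mem_ratCastRange q⟩ : ratCastRange))
    (by rintro ⟨_, q, rfl⟩; exact ⟨q, rfl⟩)).trans mk_le_aleph0

lemma mk_quotient_ratCastRange : #(ℝ ⧸ ratCastRange) = 𝔠 := by
  have hprod : #(ℝ ⧸ ratCastRange) * #ratCastRange = 𝔠 := by
    rw [← mk_real, mk_congr (AddSubgroup.addGroupEquivQuotientProdAddSubgroup (s := ratCastRange)),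
      mk_prod, lift_id, lift_id]
  have haleph0 : ℵ₀ ≤ #(ℝ ⧸ ratCastRange) := by
    by_contra! h
    have : 𝔠 ≤ ℵ₀ := hprod ▸ aleph0_mul_aleph0 ▸ mul_le_mul' h.le mk_ratCastRange_le
    exact this.not_gt aleph0_lt_continuum
  rwa [mul_eq_left haleph0 (mk_ratCastRange_le.trans haleph0)
    (mk_ne_zero_iff.mpr ⟨0⟩)] at hprod

lemma exists_mem_Ioo_mk_eq (q : ℝ ⧸ ratCastRange) {a b : ℝ} (hab : a < b) :
    ∃ x ∈ Ioo a b, (x : ℝ ⧸ ratCastRange) = q := by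
  obtain ⟨r, rfl⟩ := QuotientAddGroup.mk_surjective q
  obtain ⟨s, has, hsb⟩ := exists_rat_btwn (sub_lt_sub_right hab r)
  refine ⟨r + s, ⟨by linarith, by linarith⟩, ?_⟩
  rw [QuotientAddGroup.mk_add, (QuotientAddGroup.eq_zero_iff _).mpr (ratCast_mem_ratCastRange s),
    add_zero]

lemma exists_image_Ioo_eq_univ {α : Type} [Nonempty α] (hα : #α ≤ 𝔠) :
    ∃ g : ℝ → α, ∀ a b, a < b → g '' Ioo a b = Set.univ := by
  obtain ⟨e⟩ := hα.trans mk_quotient_ratCastRange.ge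
  refine ⟨Function.invFun e ∘ QuotientAddGroup.mk, fun a b hab => ?_⟩
  refine eq_univ_of_forall fun y => ?_
  obtain ⟨q, rfl⟩ := Function.invFun_surjective e.injective y
  obtain ⟨x, hx, rfl⟩ := exists_mem_Ioo_mk_eq q hab
  exact ⟨x, hx, rfl⟩

section ImageIooEq

variable {Y : Type*} {g : ℝ → Y} {C : Set Y}

lemma image_eq_of_image_Ioo_eq (hg : ∀ a b, a < b → g '' Ioo a b = C) {s : Set ℝ}
    (hs : IsPreconnected s) {a b : ℝ} (ha : a ∈ s) (hb : b ∈ s) (hab : a < b) : g '' s = C := by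
  refine (image_subset_iff.mpr fun x _ => ?_).antisymm ?_
  · rw [← hg (x - 1) (x + 1) (by linarith)]
    exact mem_image_of_mem g ⟨by linarith, by linarith⟩
  · rw [← hg a b hab]
    exact image_mono ((hs.ordConnected.out ha hb).trans' Ioo_subset_Icc_self)

lemma IsConnected.image_of_image_Ioo_eq [TopologicalSpace Y]
    (hg : ∀ a b, a < b → g '' Ioo a b = C) {s : Set ℝ} (hs : IsConnected s)
    (hC : IsConnected C) : IsConnected (g '' s) := by
  rcases s.subsingleton_or_nontrivial with hsub | hnt
  · exact ⟨hs.nonempty.image g, (hsub.image g).isPreconnected⟩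
  · obtain ⟨a, ha, b, hb, hab⟩ := hnt.exists_lt
    rwa [image_eq_of_image_Ioo_eq hg hs.isPreconnected ha hb hab]

end ImageIooEq

lemma not_isCompact_Iio {α : Type*} [TopologicalSpace α] [LinearOrder α] [OrderTopology α]
    [PreconnectedSpace α] {a : α} (ha : ¬ IsMin a) : ¬ IsCompact (Iio a) := by
  intro h
  obtain ⟨b, hb⟩ := not_isMin_iff.mp ha
  have huniv := IsClopen.eq_univ ⟨h.isClosed, isOpen_Iio⟩ ⟨b, hb⟩
  have ha : a ∈ Iio a := huniv ▸ mem_univ a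
  exact lt_irrefl a ha

theorem exists_connP_not_continuumP :
    ∃ f : Set.Icc (0:ℝ) 1 → Set.Icc (0:ℝ) 1,
      (∀ A : Set (Set.Icc (0:ℝ) 1), IsConnected A → IsConnected (f '' A)) ∧
      ¬ ∀ K : Set (Set.Icc (0:ℝ) 1), IsCompact K → IsConnected K →
          IsCompact (f '' K) ∧ IsConnected (f '' K) := by
  set zero : Icc (0:ℝ) 1 := ⟨0, left_mem_Icc.mpr zero_le_one⟩
  set one : Icc (0:ℝ) 1 := ⟨1, right_mem_Icc.mpr zero_le_one⟩
  have hzero : zero < one := Subtype.mk_lt_mk.mpr zero_lt_one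
  have : Nonempty (Iio one) := ⟨⟨zero, hzero⟩⟩
  obtain ⟨g, hg⟩ := exists_image_Ioo_eq_univ (α := Iio one)
    ((mk_subtype_le _).trans ((mk_subtype_le _).trans mk_real.le))
  have hgIio : ∀ a b, a < b → (Subtype.val ∘ g) '' Ioo a b = Iio one := fun a b hab => by
    rw [image_comp, hg a b hab, image_univ, Subtype.range_coe]
  have hIio : IsConnected (Iio one) := ⟨⟨zero, hzero⟩, isPreconnected_Iio⟩
  refine ⟨(Subtype.val ∘ g) ∘ Subtype.val, fun A hA => ?_, fun h => ?_⟩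
  · rw [image_comp]
    exact (hA.image _ continuous_subtype_val.continuousOn).image_of_image_Ioo_eq hgIio hIio
  · have hcompact := (h univ isCompact_univ isConnected_univ).1
    rw [image_comp, image_univ, Subtype.range_coe,
      image_eq_of_image_Ioo_eq hgIio isPreconnected_Icc (left_mem_Icc.mpr zero_le_one)
        (right_mem_Icc.mpr zero_le_one) zero_lt_one] at hcompact
    exact not_isCompact_Iio (not_isMin_iff.mpr ⟨zero, hzero⟩) hcompact
end

section
/- Let K be a nondegenerate metric continuum such that no countable subset separates K, and let A ⊆ K be a set meeting every Cantor subset of K (half of a Bernstein decomposition). Then A is dense and connected. -/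
/-!
A closed set disjoint from `A` is countable, since every uncountable closed subset of a Polish
space contains a Cantor set. Density follows because in a space without isolated points the
closure of a nonempty open set is perfect, hence uncountable. For connectedness, a splitting of
`A` into two relatively open pieces gives two separated sets, which in a metric (completely
normal) space have disjoint open neighbourhoods `E` and `F`; the closed set `(E ∪ F)ᶜ` misses
`A`, so it is countable and `E ∪ F` must be preconnected, which it is not.
-/

open Set

theorem uncountable_nat_bool : Uncountable (ℕ → Bool) := by
  rw [← Cardinal.aleph0_lt_mk_iff]
  simpa using Cardinal.cantor Cardinal.aleph0

section Polish

variable {X : Type*} [TopologicalSpace X] [PolishSpace X]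

theorem Perfect.not_countable {C : Set X} (hC : Perfect C) (hne : C.Nonempty) : ¬C.Countable := by
  let := TopologicalSpace.upgradeIsCompletelyMetrizable X
  obtain ⟨f, hfC, -, hf⟩ := hC.exists_nat_bool_injection hne
  have := uncountable_nat_bool
  exact fun hcount => not_countable_univ <| by simpa using (hcount.mono hfC).preimage hf

theorem IsClosed.exists_subset_homeomorph_nat_bool {C : Set X} (hC : IsClosed C)
    (hunc : ¬C.Countable) : ∃ D ⊆ C, Nonempty (D ≃ₜ (ℕ → Bool)) := by
  obtain ⟨f, hfC, hfc, hf⟩ := hC.exists_nat_bool_injection_of_not_countable hunc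
  exact ⟨range f, hfC, ⟨(hfc.isClosedEmbedding hf).toHomeomorph.symm⟩⟩

def MeetsEveryCantorSet (A : Set X) : Prop :=
  ∀ C : Set X, Nonempty (C ≃ₜ (ℕ → Bool)) → (A ∩ C).Nonempty

namespace MeetsEveryCantorSet

variable {A : Set X}

theorem inter_nonempty_of_isClosed (hA : MeetsEveryCantorSet A) {C : Set X} (hC : IsClosed C)
    (hunc : ¬C.Countable) : (A ∩ C).Nonempty := by
  obtain ⟨D, hDC, hD⟩ := hC.exists_subset_homeomorph_nat_bool hunc
  exact (hA D hD).mono (inter_subset_inter_right A hDC)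

theorem countable_of_isClosed_of_disjoint (hA : MeetsEveryCantorSet A) {C : Set X}
    (hC : IsClosed C) (hAC : Disjoint A C) : C.Countable := by
  by_contra hunc
  exact not_disjoint_iff_nonempty_inter.2 (hA.inter_nonempty_of_isClosed hC hunc) hAC

theorem dense [PerfectSpace X] (hA : MeetsEveryCantorSet A) : Dense A := by
  refine dense_iff_inter_open.2 fun U hU ⟨x, hx⟩ => ?_
  obtain ⟨V, hVx, hVc, hVU⟩ := exists_mem_nhds_isClosed_subset (hU.mem_nhds hx)
  have hsub : closure (interior V) ⊆ U := (closure_minimal interior_subset hVc).trans hVU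
  have hne : (closure (interior V)).Nonempty :=
    ⟨x, subset_closure (mem_interior_iff_mem_nhds.2 hVx)⟩
  obtain ⟨y, hyA, hy⟩ := hA.inter_nonempty_of_isClosed isClosed_closure
    (isOpen_interior.perfect_closure.not_countable hne)
  exact ⟨y, hsub hy, hyA⟩

end MeetsEveryCantorSet

end Polish

theorem isPreconnected_of_forall_isClosed_disjoint_isPreconnected_compl {X : Type*}
    [TopologicalSpace X] [CompletelyNormalSpace X] {A : Set X}
    (h : ∀ C : Set X, IsClosed C → Disjoint A C → IsPreconnected Cᶜ) :
    IsPreconnected A := by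
  intro u v hu hv hAuv hAu hAv
  by_contra hempty
  have huv : Disjoint (A ∩ u) v := by
    rw [disjoint_iff_inter_eq_empty, inter_assoc]
    exact not_nonempty_iff_eq_empty.1 hempty
  have hvu : Disjoint u (A ∩ v) := by
    rw [disjoint_iff_inter_eq_empty, inter_left_comm]
    exact not_nonempty_iff_eq_empty.1 hempty
  obtain ⟨E, F, hE, hF, huE, hvF, hEF⟩ := separatedNhds_iff_disjoint.2 <| completely_normal
    ((huv.closure_left hv).mono_right inter_subset_right)
    ((hvu.closure_right hu).mono_left inter_subset_right)
  have hAEF : A ⊆ E ∪ F := fun z hz =>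
    (hAuv hz).imp (fun hzu => huE ⟨hz, hzu⟩) (fun hzv => hvF ⟨hz, hzv⟩)
  have hEF_preconn : IsPreconnected (E ∪ F) := by
    simpa only [compl_compl] using
      h (E ∪ F)ᶜ (hE.union hF).isClosed_compl (disjoint_compl_right_iff_subset.2 hAEF)
  obtain ⟨z, -, hzE, hzF⟩ := hEF_preconn E F hE hF subset_rfl
    (hAu.mono fun z hz => ⟨Or.inl (huE hz), huE hz⟩)
    (hAv.mono fun z hz => ⟨Or.inr (hvF hz), hvF hz⟩)
  exact hEF.ne_of_mem hzE hzF rfl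

theorem bernstein_half_dense_connected {K : Type*}
    [MetricSpace K] [CompactSpace K] [ConnectedSpace K] [Nontrivial K]
    (hsep : ∀ S : Set K, S.Countable → IsPreconnected Sᶜ)
    (A : Set K)
    (hA : ∀ C : Set K, Nonempty (C ≃ₜ (ℕ → Bool)) → (A ∩ C).Nonempty) :
    Dense A ∧ IsConnected A := by
  have hdense : Dense A := MeetsEveryCantorSet.dense hA
  refine ⟨hdense, hdense.nonempty, ?_⟩
  refine isPreconnected_of_forall_isClosed_disjoint_isPreconnected_compl fun C hC hAC => ?_
  exact hsep C (MeetsEveryCantorSet.countable_of_isClosed_of_disjoint hA hC hAC)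
end

section
/- There exists a function f : [0,1]² → [0,1] that is continuum-preserving but not connectedness-preserving. -/
/-!
Enumerate in order type `𝔠` all pairs `(K, y)` with `K` a closed uncountable subset of the
square and `y ∈ [0,1] ⊕ {0,1}`, and choose pairwise distinct points `x_{K,y} ∈ K` by
transfinite recursion, possible since each such `K` has `𝔠` points. Sending `x_{K,y}` to `y`
gives `h` mapping every closed uncountable set onto `[0,1] ⊕ {0,1}`; let `f` be `h` followed by
the identity on `[0,1]` and the inclusion on `{0,1}`. Every nondegenerate continuum is closed and
uncountable, so its image is all of `[0,1]`. The set `B := h⁻¹ {0,1}` meets every closed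
uncountable set; since complements of countable sets in the square are connected, `B` is
connected, while `f '' B = {0, 1}`.
-/

open Set Function Topology Metric
open Cardinal hiding univ
open scoped unitInterval

universe u

theorem exists_injective_forall_mem {ι α : Type u} [LinearOrder ι] [WellFoundedLT ι]
    (A : ι → Set α) (hA : ∀ i, #(Iio i) < #(A i)) :
    ∃ g : ι → α, Injective g ∧ ∀ i, g i ∈ A i := by
  have fresh : ∀ i (prev : Iio i → α), ∃ a ∈ A i, a ∉ range prev := by
    intro i prev
    by_contra! h
    exact (mk_range_le.trans_lt (hA i)).not_ge (mk_le_mk_of_subset h)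
  choose pick pick_mem pick_fresh using fresh
  let g : ι → α := WellFoundedLT.fix fun i rec => pick i fun j => rec j j.2
  have hg : ∀ i, g i = pick i fun j => g j := WellFoundedLT.fix_eq _
  refine ⟨g, Injective.of_lt_imp_ne fun i j hij hgij => ?_, fun i => hg i ▸ pick_mem _ _⟩
  exact pick_fresh j (fun k : Iio j => g k) ⟨⟨i, hij⟩, hgij.trans (hg j)⟩

theorem exists_forall_surjOn_of_mk_le {α β : Type u} [Nonempty β] {κ : Cardinal.{u}}
    (𝒦 : Set (Set α)) (h𝒦β : #(𝒦 × β) ≤ κ) (h𝒦 : ∀ K ∈ 𝒦, κ ≤ #K) :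
    ∃ h : α → β, ∀ K ∈ 𝒦, SurjOn h K univ := by
  rcases isEmpty_or_nonempty 𝒦 with h𝒦e | h𝒦ne
  · exact ⟨fun _ => Classical.arbitrary β, fun K hK => (h𝒦e.false ⟨K, hK⟩).elim⟩
  obtain ⟨e⟩ : Nonempty (𝒦 × β ↪ κ.ord.ToType) := by rwa [← le_def, mk_ord_toType]
  set τ := invFun e
  obtain ⟨g, hg, hgτ⟩ := exists_injective_forall_mem (fun i => ((τ i).1 : Set α))
    fun i => (by simpa using mk_Iio_lt i : #(Iio i) < κ).trans_le (h𝒦 _ (τ i).1.2)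
  refine ⟨extend g (fun i => (τ i).2) fun _ => Classical.arbitrary β, fun K hK b _ => ?_⟩
  obtain ⟨i, hi⟩ := invFun_surjective e.injective (⟨K, hK⟩, b)
  exact ⟨g i, by simpa [τ, hi] using hgτ i, by simp [hg.extend_apply, τ, hi]⟩

theorem mk_setOf_isClosed_le (X : Type u) [TopologicalSpace X] [SecondCountableTopology X] :
    #{K : Set X | IsClosed K} ≤ 𝔠 := by
  let B := TopologicalSpace.countableBasis X
  let code : {K : Set X | IsClosed K} → Set B := fun K => {b | (b : Set X) ⊆ (K : Set X)ᶜ}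
  have compl_eq (K : {K : Set X | IsClosed K}) :
      (K : Set X)ᶜ = ⋃ b ∈ code K, (b : Set X) := by
    rw [(TopologicalSpace.isBasis_countableBasis X).open_eq_sUnion' K.2.isOpen_compl]
    ext
    simp only [mem_ofPred_eq, mem_sUnion, iUnion_coe_set, mem_iUnion, exists_prop, B, code]
    tauto
  have hcode : Injective code := fun K L hKL =>
    Subtype.ext (compl_injective ((compl_eq K).trans (hKL ▸ (compl_eq L).symm)))
  calc #{K : Set X | IsClosed K} ≤ #(Set B) := mk_le_of_injective hcode
    _ = 2 ^ #B := mk_set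
    _ ≤ 2 ^ ℵ₀ := power_le_power_left two_ne_zero
        (mk_le_aleph0_iff.2 (TopologicalSpace.countable_countableBasis X).to_subtype)
    _ = 𝔠 := two_power_aleph0

theorem IsClosed.continuum_le_mk {X : Type u} [TopologicalSpace X] [PolishSpace X] {K : Set X}
    (hK : IsClosed K) (hK' : ¬K.Countable) : 𝔠 ≤ #K := by
  obtain ⟨f, hfK, -, hf⟩ := hK.exists_nat_bool_injection_of_not_countable hK'
  simpa [two_power_aleph0] using lift_mk_le_lift_mk_of_injective
    (f := codRestrict f K fun x => hfK ⟨x, rfl⟩) (hf.codRestrict _)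

theorem Metric.not_countable_closedBall {X : Type*} [MetricSpace X] [PreconnectedSpace X]
    [Nontrivial X] (x : X) {r : ℝ} (hr : 0 < r) : ¬(closedBall x r).Countable := by
  intro hc
  obtain ⟨y, hy⟩ := exists_ne x
  have hrange : IsPreconnected (range (dist · x)) :=
    isPreconnected_range (continuous_id.dist continuous_const)
  have hsub : Icc 0 (min r (dist y x)) ⊆ (dist · x) '' closedBall x r := by
    rintro s ⟨hs0, hs⟩
    obtain ⟨p, rfl⟩ := hrange.Icc_subset ⟨x, dist_self x⟩ ⟨y, rfl⟩
      ⟨hs0, hs.trans (min_le_right _ _)⟩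
    exact ⟨p, hs.trans (min_le_left _ _), rfl⟩
  refine aleph0_lt_continuum.not_ge ?_
  rw [← mk_Icc_real (lt_min hr (dist_pos.2 hy)), mk_le_aleph0_iff]
  exact ((hc.image _).mono hsub).to_subtype

theorem Set.Countable.isPreconnected_compl_of_denseRange {E X : Type*} [AddCommGroup E]
    [Module ℝ E] [TopologicalSpace E] [ContinuousAdd E] [ContinuousSMul ℝ E]
    [TopologicalSpace X] (hE : 1 < Module.rank ℝ E) {φ : E → X} (hφ : Continuous φ)
    (hφi : Injective φ) (hφd : DenseRange φ) {S : Set X} (hS : S.Countable) :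
    IsPreconnected Sᶜ := by
  have hS' : (φ ⁻¹' S).Countable := hS.preimage hφi
  have : Nontrivial E := (rank_pos_iff_nontrivial (R := ℝ)).1 (zero_lt_one.trans hE)
  refine (hS'.isConnected_compl_of_one_lt_rank hE).isPreconnected.image φ hφ.continuousOn
    |>.subset_closure (image_preimage_subset φ Sᶜ) ?_
  rw [(hφd.dense_image hφ (hS'.dense_compl ℝ)).closure_eq]
  exact subset_univ _

theorem unitInterval.denseRange_sigmoid : DenseRange unitInterval.sigmoid := by
  rw [DenseRange, IsInducing.subtypeVal.dense_iff, unitInterval.range_sigmoid]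
  intro x
  rw [← closure_subtype, closure_Ioo zero_ne_one]
  exact ⟨x.2.1, x.2.2⟩

theorem Set.Countable.isPreconnected_compl_unitInterval_sq {S : Set (I × I)} (hS : S.Countable) :
    IsPreconnected Sᶜ :=
  hS.isPreconnected_compl_of_denseRange (by simp [one_add_one_eq_two])
    (unitInterval.continuous_sigmoid.prodMap unitInterval.continuous_sigmoid)
    (unitInterval.sigmoid_injective.prodMap unitInterval.sigmoid_injective)
    (unitInterval.denseRange_sigmoid.prodMap unitInterval.denseRange_sigmoid)

/-- A separation `u, v` of `B` has `u ∩ v` and `(u ∪ v)ᶜ` disjoint from `B`: the first is then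
empty (it would contain a closed ball) and the second countable, so `u, v` would separate the
complement of a countable set. -/
theorem isPreconnected_of_forall_isClosed_not_countable_inter_nonempty {X : Type*}
    [MetricSpace X] (hX : ∀ S : Set X, S.Countable → IsPreconnected Sᶜ) {B : Set X}
    (hB : ∀ K, IsClosed K → ¬K.Countable → (K ∩ B).Nonempty) : IsPreconnected B := by
  rcases subsingleton_or_nontrivial X with hX1 | hX1
  · exact B.subsingleton_of_subsingleton.isPreconnected
  have : PreconnectedSpace X := ⟨by simpa using hX ∅ countable_empty⟩
  rintro u v hu hv hBuv hBu hBv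
  by_contra! huvB
  have huv : u ∩ v = ∅ := by
    by_contra! ⟨x, hx⟩
    obtain ⟨r, hr, hball⟩ := isOpen_iff.1 (hu.inter hv) x hx
    obtain ⟨y, hyK, hyB⟩ := hB _ isClosed_closedBall (not_countable_closedBall x (half_pos hr))
    exact huvB.subset ⟨hyB, hball (closedBall_subset_ball (half_lt_self hr) hyK)⟩
  have hcount : (u ∪ v)ᶜ.Countable := by
    by_contra h
    obtain ⟨y, hy, hyB⟩ := hB _ (hu.union hv).isClosed_compl h
    exact hy (hBuv hyB)
  obtain ⟨x, -, hx⟩ := hX _ hcount u v hu hv (by rw [compl_compl])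
    (hBu.mono (inter_subset_inter_left _ (hBuv.trans (compl_compl _).ge)))
    (hBv.mono (inter_subset_inter_left _ (hBuv.trans (compl_compl _).ge)))
  exact huv.subset hx

theorem isCompact_image_and_isConnected_image_of_forall_image_eq_univ {X Y : Type*}
    [MetricSpace X] [TopologicalSpace Y] [CompactSpace Y] [ConnectedSpace Y] {f : X → Y}
    (hf : ∀ K, IsClosed K → ¬K.Countable → f '' K = univ) {C : Set X} (hCc : IsCompact C)
    (hC : IsConnected C) : IsCompact (f '' C) ∧ IsConnected (f '' C) := by
  by_cases hCs : C.Subsingleton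
  · exact ⟨(hCs.image f).isCompact, hC.nonempty.image f, (hCs.image f).isPreconnected⟩
  rw [hf C hCc.isClosed fun hc => hCs (hc.isTotallyDisconnected C subset_rfl hC.2)]
  exact ⟨isCompact_univ, isConnected_univ⟩

theorem unitInterval.not_isPreconnected_zero_one : ¬IsPreconnected ({0, 1} : Set I) := by
  intro h
  have half_mem := h.Icc_subset (mem_insert 0 {1}) (mem_insert_of_mem 0 rfl)
    (show (⟨1 / 2, by norm_num, by norm_num⟩ : I) ∈ Icc 0 1 from
      ⟨unitInterval.nonneg', unitInterval.le_one'⟩)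
  rcases half_mem with h | h <;> norm_num [Subtype.ext_iff] at h

theorem exists_forall_isClosed_not_countable_surjOn_unitInterval_sq :
    ∃ h : I × I → I ⊕ Bool, ∀ K, IsClosed K → ¬K.Countable → SurjOn h K univ := by
  let 𝒦 : Set (Set (I × I)) := {K | IsClosed K ∧ ¬K.Countable}
  have h𝒦 : #(𝒦 × (I ⊕ Bool)) ≤ 𝔠 :=
    calc _ ≤ 𝔠 * (𝔠 + 𝔠) := by
          simp only [mk_prod, mk_sum, lift_id, mk_Icc_real zero_lt_one]
          gcongr
          · exact (mk_le_mk_of_subset fun K hK => hK.1).trans (mk_setOf_isClosed_le _)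
          · exact mk_le_aleph0.trans aleph0_le_continuum
      _ = 𝔠 := by simp
  obtain ⟨h, hh⟩ :=
    exists_forall_surjOn_of_mk_le 𝒦 h𝒦 fun K hK => hK.1.continuum_le_mk hK.2
  exact ⟨h, fun K hK hK' => hh K ⟨hK, hK'⟩⟩

theorem exists_continuumP_not_connP_on_square :
    ∃ f : Set.Icc (0:ℝ) 1 × Set.Icc (0:ℝ) 1 → Set.Icc (0:ℝ) 1,
      (∀ C : Set (Set.Icc (0:ℝ) 1 × Set.Icc (0:ℝ) 1), IsCompact C → IsConnected C →
        IsCompact (f '' C) ∧ IsConnected (f '' C)) ∧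
      ¬ ∀ A : Set (Set.Icc (0:ℝ) 1 × Set.Icc (0:ℝ) 1), IsConnected A →
          IsConnected (f '' A) := by
  obtain ⟨h, hh⟩ := exists_forall_isClosed_not_countable_surjOn_unitInterval_sq
  let f : I × I → I := Sum.elim id (fun b => cond b 1 0) ∘ h
  let B := h ⁻¹' range Sum.inr
  have hfK : ∀ K, IsClosed K → ¬K.Countable → f '' K = univ := fun K hK hK' =>
    eq_univ_of_forall fun w => by
      obtain ⟨x, hxK, hx⟩ := hh K hK hK' (mem_univ (Sum.inl w))
      exact ⟨x, hxK, by simp [f, hx]⟩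
  have hfB : f '' B = {0, 1} := by
    have hval : ∀ b : Bool, cond b 1 0 ∈ f '' B := fun b => by
      obtain ⟨x, -, hx⟩ := hh _ isClosed_closedBall
        (not_countable_closedBall (0 : I × I) one_pos) (mem_univ (Sum.inr b))
      exact ⟨x, ⟨b, hx.symm⟩, by simp [f, hx]⟩
    refine subset_antisymm ?_ (pair_subset (hval false) (hval true))
    rintro _ ⟨x, ⟨b, hb⟩, rfl⟩
    cases b <;> simp [f, ← hb]
  have hB : IsConnected B := by
    refine ⟨(hfB ▸ insert_nonempty 0 {1} : (f '' B).Nonempty).of_image, ?_⟩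
    refine isPreconnected_of_forall_isClosed_not_countable_inter_nonempty
      (fun S hS => hS.isPreconnected_compl_unitInterval_sq) fun K hK hK' => ?_
    obtain ⟨x, hxK, hx⟩ := hh K hK hK' (mem_univ (Sum.inr true))
    exact ⟨x, hxK, true, hx.symm⟩
  refine ⟨f, fun C hCc hC => isCompact_image_and_isConnected_image_of_forall_image_eq_univ hfK
    hCc hC, fun hf => unitInterval.not_isPreconnected_zero_one ?_⟩
  exact hfB ▸ (hf B hB).isPreconnected
end
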